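/- The antipode S of the Connes–Moscovici algebra is an involution: S ∘ S = id_H on H = A ⊗ Q ⊗ A; in particular S is bijective, as required of the antipode of a Hopf algebroid. -/

import Mathlib

/-! `T` reverses the coproduct (`Δ ∘ T` and `(T ⊗ T) ∘ flip ∘ Δ` are both convolution inverses of
`Δ`), so with `T² = id` two applications of `S` give
`S (S (a ⊗ q ⊗ b)) = Σ (q₂ T(q₁))·a ⊗ q₃ ⊗ (q₄ T(q₅))·b` in five-fold Sweedler notation.
Both brackets collapse to counits: `q₄ T(q₅)` by the antipode axiom and
`q₂ T(q₁) = T(q₁ T(q₂))` because `T` is an involutive anti-homomorphism. -/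

open TensorProduct

noncomputable section

/-- `(id ⊗ Δ) ∘ Δ : Q → Q ⊗ (Q ⊗ Q)`, producing the Sweedler legs
`q₍₁₎ ⊗ q₍₂₎ ⊗ q₍₃₎` of the iterated coproduct. -/
def comul2 (Q : Type*) [Ring Q] [HopfAlgebra ℂ Q] :
    Q →ₗ[ℂ] Q ⊗[ℂ] (Q ⊗[ℂ] Q) :=
  (LinearMap.lTensor Q (Coalgebra.comul (R := ℂ))).comp (Coalgebra.comul (R := ℂ))

/-- The right-hand side `Σ a (q₍₁₎·a') ⊗ q₍₂₎ q' ⊗ (q₍₃₎·b') b` of the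
Connes–Moscovici product formula on `H = A ⊗ Q ⊗ A`. -/
def cmMulRHS {Q A : Type*} [Ring Q] [HopfAlgebra ℂ Q] [Ring A] [Algebra ℂ A]
    (act : Q →ₗ[ℂ] A →ₗ[ℂ] A) (a : A) (q : Q) (b : A) (a' : A) (q' : Q) (b' : A) :
    A ⊗[ℂ] (Q ⊗[ℂ] A) :=
  TensorProduct.map ((LinearMap.mulLeft ℂ a).comp (act.flip a'))
    (TensorProduct.map (LinearMap.mulRight ℂ q')
      ((LinearMap.mulRight ℂ b).comp (act.flip b')))
    (comul2 Q q)

/-- The order-reversing map `A ⊗ (Q ⊗ A) → A ⊗ (Q ⊗ A)`, `x ⊗ y ⊗ z ↦ z ⊗ y ⊗ x`. -/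
def cmRev {Q A : Type*} [Ring Q] [HopfAlgebra ℂ Q] [Ring A] [Algebra ℂ A] :
    (A ⊗[ℂ] (Q ⊗[ℂ] A)) →ₗ[ℂ] (A ⊗[ℂ] (Q ⊗[ℂ] A)) :=
  (TensorProduct.congr (LinearEquiv.refl ℂ A) (TensorProduct.comm ℂ Q A) ≪≫ₗ
    (TensorProduct.assoc ℂ A A Q).symm ≪≫ₗ
    TensorProduct.congr (TensorProduct.comm ℂ A A) (LinearEquiv.refl ℂ Q) ≪≫ₗ
    TensorProduct.assoc ℂ A A Q ≪≫ₗ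
    TensorProduct.congr (LinearEquiv.refl ℂ A) (TensorProduct.comm ℂ A Q)).toLinearMap

/-- The value `Σ T(q₍₃₎)·b ⊗ T(q₍₂₎) ⊗ T(q₍₁₎)·a` of the antipode of the
Connes–Moscovici algebra on an elementary tensor `a ⊗ q ⊗ b`. -/
def cmAntipodeRHS {Q A : Type*} [Ring Q] [HopfAlgebra ℂ Q] [Ring A] [Algebra ℂ A]
    (act : Q →ₗ[ℂ] A →ₗ[ℂ] A) (a : A) (q : Q) (b : A) :
    A ⊗[ℂ] (Q ⊗[ℂ] A) :=
  cmRev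
    (TensorProduct.map ((act.flip a).comp (HopfAlgebra.antipode (R := ℂ)))
      (TensorProduct.map (HopfAlgebra.antipode (R := ℂ))
        ((act.flip b).comp (HopfAlgebra.antipode (R := ℂ))))
      (comul2 Q q))

namespace Coalgebra

variable {R C : Type*} [CommSemiring R] [AddCommMonoid C] [Module R C] [Coalgebra R C]

lemma sum_counit_right_smul {ι : Type*} {c : C} (ρ : Repr R c ι) :
    ∑ i ∈ ρ.index, counit (R := R) (ρ.right i) • ρ.left i = c := by
  simpa only [map_sum, _root_.TensorProduct.rid_tmul, one_smul] using
    congrArg (_root_.TensorProduct.rid R C) (sum_tmul_counit_eq ρ)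

end Coalgebra

namespace HopfAlgebra

open Coalgebra

variable {R H : Type*} [CommSemiring R] [Semiring H] [HopfAlgebra R H]

local notation "T" => antipode R (A := H)
local notation "δ" => comul (R := R) (A := H)

lemma sum_comul_mul_one_tmul_antipode {ι : Type*} {w : H} (ρ : Repr R w ι) :
    ∑ i ∈ ρ.index, δ (ρ.left i) * (1 ⊗ₜ T (ρ.right i)) = w ⊗ₜ 1 := by
  let Ψ : H ⊗[R] (H ⊗[R] H) →ₗ[R] H ⊗[R] H :=
    LinearMap.lTensor H (LinearMap.mul' R H ∘ₗ (antipode R).lTensor H)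
  calc ∑ i ∈ ρ.index, δ (ρ.left i) * (1 ⊗ₜ T (ρ.right i))
      = ∑ i ∈ ρ.index, ∑ j ∈ (ℛ R (ρ.left i)).index,
          Ψ ((ℛ R (ρ.left i)).left j ⊗ₜ ((ℛ R (ρ.left i)).right j ⊗ₜ ρ.right i)) := by
        refine Finset.sum_congr rfl fun i _ ↦ ?_
        simp [Ψ, ← (ℛ R (ρ.left i)).eq, Finset.sum_mul]
    _ = ∑ i ∈ ρ.index, ∑ j ∈ (ℛ R (ρ.right i)).index,
          Ψ (ρ.left i ⊗ₜ ((ℛ R (ρ.right i)).left j ⊗ₜ (ℛ R (ρ.right i)).right j)) := by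
        simp only [← map_sum]
        rw [sum_tmul_tmul_eq]
    _ = w ⊗ₜ 1 := by
        simp only [Ψ, LinearMap.lTensor_tmul, LinearMap.comp_apply, LinearMap.mul'_apply,
          ← tmul_sum, sum_mul_antipode_eq_smul, tmul_smul]
        simp only [smul_tmul', ← sum_tmul, sum_counit_right_smul]

lemma sum_right_mul_antipode_left (hT : Function.Involutive T) {ι : Type*} {w : H}
    (ρ : Repr R w ι) :
    ∑ i ∈ ρ.index, ρ.right i * T (ρ.left i) = counit (R := R) w • 1 := by
  calc ∑ i ∈ ρ.index, ρ.right i * T (ρ.left i)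
      = T (∑ i ∈ ρ.index, ρ.left i * T (ρ.right i)) := by
        simp only [map_sum, antipode_mul_antidistrib, hT _]
    _ = counit (R := R) w • 1 := by rw [sum_mul_antipode_eq_smul, map_smul, antipode_one]

lemma sum_comul_mul_antipode_tmul_one (hT : Function.Involutive T) {ι : Type*} {w : H}
    (ρ : Repr R w ι) :
    ∑ i ∈ ρ.index, δ (ρ.right i) * (T (ρ.left i) ⊗ₜ 1) = 1 ⊗ₜ w := by
  let Ψ : H ⊗[R] (H ⊗[R] H) →ₗ[R] H ⊗[R] H :=
    LinearMap.rTensor H (LinearMap.mul' R H ∘ₗ (TensorProduct.comm R H H).toLinearMap ∘ₗ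
      (antipode R).rTensor H) ∘ₗ (TensorProduct.assoc R H H H).symm.toLinearMap
  calc ∑ i ∈ ρ.index, δ (ρ.right i) * (T (ρ.left i) ⊗ₜ 1)
      = ∑ i ∈ ρ.index, ∑ j ∈ (ℛ R (ρ.right i)).index,
          Ψ (ρ.left i ⊗ₜ ((ℛ R (ρ.right i)).left j ⊗ₜ (ℛ R (ρ.right i)).right j)) := by
        refine Finset.sum_congr rfl fun i _ ↦ ?_
        simp [Ψ, ← (ℛ R (ρ.right i)).eq, Finset.sum_mul]
    _ = ∑ i ∈ ρ.index, ∑ j ∈ (ℛ R (ρ.left i)).index,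
          Ψ ((ℛ R (ρ.left i)).left j ⊗ₜ ((ℛ R (ρ.left i)).right j ⊗ₜ ρ.right i)) := by
        simp only [← map_sum]
        rw [sum_tmul_tmul_eq]
    _ = 1 ⊗ₜ w := by
        simp only [Ψ, LinearMap.comp_apply, LinearEquiv.coe_coe, assoc_symm_tmul,
          LinearMap.rTensor_tmul, comm_tmul, LinearMap.mul'_apply, ← sum_tmul,
          sum_right_mul_antipode_left hT]
        simp only [smul_tmul, ← tmul_sum, sum_counit_smul]

lemma sum_lTensor_comul_comul_mul_antipode {ι : Type*} {w : H} (ρ : Repr R w ι) :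
    ∑ i ∈ ρ.index, LinearMap.lTensor H δ (δ (ρ.left i)) * (1 ⊗ₜ (1 ⊗ₜ T (ρ.right i))) =
      Algebra.TensorProduct.lTensor (S := R) H
        (Algebra.TensorProduct.includeLeft (R := R) (S := R) (A := H) (B := H)) (δ w) := by
  let Ψ : H ⊗[R] (H ⊗[R] H) →ₗ[R] H ⊗[R] (H ⊗[R] H) :=
    LinearMap.lTensor H (LinearMap.mul' R (H ⊗[R] H) ∘ₗ
      map δ ((Algebra.TensorProduct.includeRight (R := R) (A := H)).toLinearMap ∘ₗ T))
  calc ∑ i ∈ ρ.index, LinearMap.lTensor H δ (δ (ρ.left i)) * (1 ⊗ₜ (1 ⊗ₜ T (ρ.right i)))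
      = ∑ i ∈ ρ.index, ∑ j ∈ (ℛ R (ρ.left i)).index,
          Ψ ((ℛ R (ρ.left i)).left j ⊗ₜ ((ℛ R (ρ.left i)).right j ⊗ₜ ρ.right i)) := by
        refine Finset.sum_congr rfl fun i _ ↦ ?_
        simp [Ψ, ← (ℛ R (ρ.left i)).eq, Finset.sum_mul]
    _ = ∑ i ∈ ρ.index, ∑ j ∈ (ℛ R (ρ.right i)).index,
          Ψ (ρ.left i ⊗ₜ ((ℛ R (ρ.right i)).left j ⊗ₜ (ℛ R (ρ.right i)).right j)) := by
        simp only [← map_sum]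
        rw [sum_tmul_tmul_eq]
    _ = _ := by
        simp [Ψ, ← tmul_sum, sum_comul_mul_one_tmul_antipode, ← ρ.eq]

lemma comul_antipode (a : H) : δ (T a) = map T T (TensorProduct.comm R H H (δ a)) := by
  let G : WithConv (H →ₗ[R] H ⊗[R] H) :=
    WithConv.toConv (map T T ∘ₗ (TensorProduct.comm R H H).toLinearMap ∘ₗ δ)
  have hF : WithConv.toConv (δ ∘ₗ T) * WithConv.toConv δ = 1 := by
    ext x
    rw [(ℛ R x).convMul_apply]
    simp [← Bialgebra.comul_mul, ← map_sum, sum_antipode_mul_eq_algebraMap_counit]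
  have hG : WithConv.toConv δ * G = 1 := by
    let Ψ : H ⊗[R] (H ⊗[R] H) →ₗ[R] H ⊗[R] H :=
      LinearMap.mul' R (H ⊗[R] H) ∘ₗ map δ (map T T ∘ₗ (TensorProduct.comm R H H).toLinearMap)
    ext x
    let ρ := ℛ R x
    calc (WithConv.toConv δ * G).ofConv x
        = ∑ i ∈ ρ.index, ∑ j ∈ (ℛ R (ρ.right i)).index,
            Ψ (ρ.left i ⊗ₜ ((ℛ R (ρ.right i)).left j ⊗ₜ (ℛ R (ρ.right i)).right j)) := by
          rw [ρ.convMul_apply]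
          refine Finset.sum_congr rfl fun i _ ↦ ?_
          simp [Ψ, G, ← (ℛ R (ρ.right i)).eq, Finset.mul_sum]
      _ = ∑ i ∈ ρ.index, ∑ j ∈ (ℛ R (ρ.left i)).index,
            Ψ ((ℛ R (ρ.left i)).left j ⊗ₜ ((ℛ R (ρ.left i)).right j ⊗ₜ ρ.right i)) := by
          simp only [← map_sum]
          rw [sum_tmul_tmul_eq]
      _ = ∑ i ∈ ρ.index, (∑ j ∈ (ℛ R (ρ.left i)).index,
            δ ((ℛ R (ρ.left i)).left j) * (1 ⊗ₜ T ((ℛ R (ρ.left i)).right j))) *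
              (T (ρ.right i) ⊗ₜ 1) := by
          simp [Ψ, Finset.sum_mul, mul_assoc, Algebra.TensorProduct.tmul_mul_tmul]
      _ = (1 : WithConv (H →ₗ[R] H ⊗[R] H)).ofConv x := by
          simp [sum_comul_mul_one_tmul_antipode, Algebra.TensorProduct.tmul_mul_tmul, ← sum_tmul,
            sum_mul_antipode_eq_algebraMap_counit]
  exact congr($(left_inv_eq_right_inv hF hG).ofConv a)

end HopfAlgebra

section ConnesMoscovici

open HopfAlgebra
open scoped Coalgebra

variable {Q A : Type*} [Ring Q] [HopfAlgebra ℂ Q] [Ring A] [Algebra ℂ A]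

local notation "T" => antipode ℂ (A := Q)

def cmActOuter (act : Q →ₗ[ℂ] A →ₗ[ℂ] A) (a b : A) :
    Q ⊗[ℂ] (Q ⊗[ℂ] Q) →ₗ[ℂ] A ⊗[ℂ] (Q ⊗[ℂ] A) :=
  map (act.flip a) (map LinearMap.id (act.flip b))

lemma cmActOuter_tmul (act : Q →ₗ[ℂ] A →ₗ[ℂ] A) (a b : A) (x y z : Q) :
    cmActOuter act a b (x ⊗ₜ (y ⊗ₜ z)) = act x a ⊗ₜ (y ⊗ₜ act z b) := rfl

lemma cmActOuter_mul (act : Q →ₗ[ℂ] A →ₗ[ℂ] A)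
    (hact_mul : ∀ (q q' : Q) (a : A), act (q * q') a = act q (act q' a))
    (a b : A) (c d : Q) (t : Q ⊗[ℂ] (Q ⊗[ℂ] Q)) :
    cmActOuter act (act c a) (act d b) t = cmActOuter act a b (t * (c ⊗ₜ (1 ⊗ₜ d))) := by
  suffices cmActOuter act (act c a) (act d b) =
      cmActOuter act a b ∘ₗ LinearMap.mulRight ℂ (c ⊗ₜ[ℂ] (1 ⊗ₜ[ℂ] d)) from
    congr($this t)
  ext x y z
  simp [cmActOuter_tmul, hact_mul]

lemma cmRev_tmul (x : A) (y : Q) (z : A) :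
    (cmRev (x ⊗ₜ[ℂ] (y ⊗ₜ[ℂ] z)) : A ⊗[ℂ] (Q ⊗[ℂ] A)) = z ⊗ₜ (y ⊗ₜ x) := by
  simp [cmRev]

lemma cmRev_map (f h : Q →ₗ[ℂ] A) (g : Q →ₗ[ℂ] Q) (t : Q ⊗[ℂ] (Q ⊗[ℂ] Q)) :
    cmRev (map f (map g h) t) = map h (map g f) (cmRev (Q := Q) t) := by
  suffices (cmRev ∘ₗ map f (map g h) : Q ⊗[ℂ] (Q ⊗[ℂ] Q) →ₗ[ℂ] A ⊗[ℂ] (Q ⊗[ℂ] A)) =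
      map h (map g f) ∘ₗ cmRev (Q := Q) from congr($this t)
  ext x y z
  simp [cmRev_tmul]

lemma cmRev_cmRev (t : A ⊗[ℂ] (Q ⊗[ℂ] A)) : cmRev (cmRev t) = t := by
  suffices (cmRev ∘ₗ cmRev : A ⊗[ℂ] (Q ⊗[ℂ] A) →ₗ[ℂ] A ⊗[ℂ] (Q ⊗[ℂ] A)) = LinearMap.id from
    congr($this t)
  ext x y z
  simp [cmRev_tmul]

lemma comul2_antipode (p : Q) : comul2 Q (T p) = cmRev (map T (map T T) (comul2 Q p)) := by
  let Ψ : Q ⊗[ℂ] (Q ⊗[ℂ] Q) →ₗ[ℂ] Q ⊗[ℂ] (Q ⊗[ℂ] Q) := cmRev ∘ₗ map T (map T T)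
  let ρ := ℛ ℂ p
  calc comul2 Q (T p)
      = ∑ i ∈ ρ.index, ∑ j ∈ (ℛ ℂ (ρ.left i)).index,
          Ψ ((ℛ ℂ (ρ.left i)).left j ⊗ₜ ((ℛ ℂ (ρ.left i)).right j ⊗ₜ ρ.right i)) := by
        rw [comul2, LinearMap.comp_apply, comul_antipode, ← ρ.eq]
        simp [Ψ, map_sum, comul_antipode, ← (ℛ ℂ (ρ.left _)).eq, tmul_sum, cmRev_tmul]
    _ = ∑ i ∈ ρ.index, ∑ j ∈ (ℛ ℂ (ρ.right i)).index,
          Ψ (ρ.left i ⊗ₜ ((ℛ ℂ (ρ.right i)).left j ⊗ₜ (ℛ ℂ (ρ.right i)).right j)) := by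
        simp only [← map_sum]
        rw [Coalgebra.sum_tmul_tmul_eq]
    _ = cmRev (map T (map T T) (comul2 Q p)) := by
        simp [Ψ, comul2, ← ρ.eq, map_sum, ← (ℛ ℂ (ρ.right _)).eq, tmul_sum]

lemma cmAntipodeRHS_antipode (hT : Function.Involutive T) (act : Q →ₗ[ℂ] A →ₗ[ℂ] A)
    (a : A) (p : Q) (b : A) : cmAntipodeRHS act a (T p) b = cmActOuter act b a (comul2 Q p) := by
  rw [cmAntipodeRHS, comul2_antipode, cmRev_map, cmRev_cmRev, ← LinearMap.comp_apply]
  congr 1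
  ext x y z
  simp [cmActOuter_tmul, hT _]

lemma cmAntipodeRHS_eq_sum (act : Q →ₗ[ℂ] A →ₗ[ℂ] A) (a : A) {q : Q} (b : A) {ι : Type*}
    (ρ : Coalgebra.Repr ℂ q ι) :
    cmAntipodeRHS act a q b = ∑ i ∈ ρ.index, ∑ j ∈ (ℛ ℂ (ρ.right i)).index,
      act (T ((ℛ ℂ (ρ.right i)).right j)) b ⊗ₜ
        (T ((ℛ ℂ (ρ.right i)).left j) ⊗ₜ act (T (ρ.left i)) a) := by
  rw [cmAntipodeRHS, comul2, LinearMap.comp_apply, ← ρ.eq]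
  simp [map_sum, ← (ℛ ℂ (ρ.right _)).eq, tmul_sum, cmRev_tmul]

lemma cm_antipode_antipode_tmul (act : Q →ₗ[ℂ] A →ₗ[ℂ] A)
    (hact_one : ∀ a : A, act 1 a = a)
    (hact_mul : ∀ (q q' : Q) (a : A), act (q * q') a = act q (act q' a))
    (hT : Function.Involutive T)
    (S : (A ⊗[ℂ] (Q ⊗[ℂ] A)) →ₗ[ℂ] (A ⊗[ℂ] (Q ⊗[ℂ] A)))
    (hS : ∀ (a : A) (q : Q) (b : A), S (a ⊗ₜ[ℂ] (q ⊗ₜ[ℂ] b)) = cmAntipodeRHS act a q b)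
    (a : A) (q : Q) (b : A) :
    S (S (a ⊗ₜ[ℂ] (q ⊗ₜ[ℂ] b))) = a ⊗ₜ[ℂ] (q ⊗ₜ[ℂ] b) := by
  let ρ := ℛ ℂ q
  let σ := fun i ↦ ℛ ℂ (ρ.right i)
  calc S (S (a ⊗ₜ[ℂ] (q ⊗ₜ[ℂ] b)))
      = ∑ i ∈ ρ.index, ∑ j ∈ (σ i).index,
          S (act (T ((σ i).right j)) b ⊗ₜ (T ((σ i).left j) ⊗ₜ act (T (ρ.left i)) a)) := by
        rw [hS, cmAntipodeRHS_eq_sum act a b ρ]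
        simp only [map_sum]
        rfl
    _ = ∑ i ∈ ρ.index, ∑ j ∈ (σ i).index, cmActOuter act a b
          (comul2 Q ((σ i).left j) * (T (ρ.left i) ⊗ₜ (1 ⊗ₜ T ((σ i).right j)))) := by
        simp only [hS, cmAntipodeRHS_antipode hT, cmActOuter_mul act hact_mul]
    _ = cmActOuter act a b (∑ i ∈ ρ.index, (∑ j ∈ (σ i).index,
          comul2 Q ((σ i).left j) * (1 ⊗ₜ (1 ⊗ₜ T ((σ i).right j)))) * (T (ρ.left i) ⊗ₜ 1)) := by
        simp [map_sum, Finset.sum_mul, mul_assoc, Algebra.TensorProduct.one_def]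
    _ = cmActOuter act a b (Algebra.TensorProduct.lTensor (S := ℂ) Q
          (Algebra.TensorProduct.includeLeft (R := ℂ) (S := ℂ) (A := Q) (B := Q))
          (∑ i ∈ ρ.index, Coalgebra.comul (ρ.right i) * (T (ρ.left i) ⊗ₜ 1))) := by
        simp only [comul2, LinearMap.comp_apply, sum_lTensor_comul_comul_mul_antipode, map_sum,
          map_mul]
        simp [Algebra.TensorProduct.one_def]
    _ = a ⊗ₜ[ℂ] (q ⊗ₜ[ℂ] b) := by
        rw [sum_comul_mul_antipode_tmul_one hT]
        simp [cmActOuter_tmul, hact_one]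

end ConnesMoscovici

theorem cm_antipode_involutive_general
    {Q A : Type*} [Ring Q] [HopfAlgebra ℂ Q] [Ring A] [Algebra ℂ A]
    (act : Q →ₗ[ℂ] A →ₗ[ℂ] A)
    (hact_one : ∀ a : A, act 1 a = a)
    (hact_mul : ∀ (q q' : Q) (a : A), act (q * q') a = act q (act q' a))
    (hT : ∀ q : Q, HopfAlgebra.antipode (R := ℂ) (HopfAlgebra.antipode (R := ℂ) q) = q)
    -- the antipode of `H`:
    (S : (A ⊗[ℂ] (Q ⊗[ℂ] A)) →ₗ[ℂ] (A ⊗[ℂ] (Q ⊗[ℂ] A)))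
    (hS : ∀ (a : A) (q : Q) (b : A),
      S (a ⊗ₜ[ℂ] (q ⊗ₜ[ℂ] b)) = cmAntipodeRHS act a q b) :
    (∀ x : A ⊗[ℂ] (Q ⊗[ℂ] A), S (S x) = x) ∧ Function.Bijective S := by
  have hSS : S ∘ₗ S = LinearMap.id := by
    ext a q b
    exact cm_antipode_antipode_tmul act hact_one hact_mul hT S hS a q b
  have hinv : Function.Involutive S := fun x ↦ congr($hSS x)
  exact ⟨hinv, hinv.bijective⟩

/-- The antipode `S` of the Connes–Moscovici Hopf algebroid is an involution:
`S ∘ S = id` on `H = A ⊗ Q ⊗ A`; in particular `S` is bijective. -/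
theorem cm_antipode_involutive
    {Q A : Type*} [Ring Q] [HopfAlgebra ℂ Q] [Ring A] [Algebra ℂ A]
    (act : Q →ₗ[ℂ] A →ₗ[ℂ] A)
    (hact_one : ∀ a : A, act 1 a = a)
    (hact_mul : ∀ (q q' : Q) (a : A), act (q * q') a = act q (act q' a))
    (hact_alg_mul : ∀ (q : Q) (a a' : A),
      act q (a * a') =
        LinearMap.mul' ℂ A
          (TensorProduct.map (act.flip a) (act.flip a') (Coalgebra.comul (R := ℂ) q)))
    (hact_alg_one : ∀ q : Q, act q 1 = Coalgebra.counit (R := ℂ) q • (1 : A))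
    (hT : ∀ q : Q, HopfAlgebra.antipode (R := ℂ) (HopfAlgebra.antipode (R := ℂ) q) = q)
    -- the antipode of `H`:
    (S : (A ⊗[ℂ] (Q ⊗[ℂ] A)) →ₗ[ℂ] (A ⊗[ℂ] (Q ⊗[ℂ] A)))
    (hS : ∀ (a : A) (q : Q) (b : A),
      S (a ⊗ₜ[ℂ] (q ⊗ₜ[ℂ] b)) = cmAntipodeRHS act a q b) :
    (∀ x : A ⊗[ℂ] (Q ⊗[ℂ] A), S (S x) = x) ∧ Function.Bijective S :=
  cm_antipode_involutive_general act hact_one hact_mul hT S hS
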